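/- For every m ≥ 0, at least one of the polynomials f^m(x) - 1 and f^m(x - 1) - 1 is irreducible over Q, where f^m is the m-th iterate of f = x^2 - 1. In particular f^m - 1 is irreducible over Q. -/

import Mathlib

open Polynomial

/-- The iterates of `f = X^2 - 1` in `ℚ[X]`. -/
noncomputable def fIterQ : ℕ → Polynomial ℚ
  | 0 => X
  | m + 1 => (fIterQ m) ^ 2 - 1

/-- Integer version of the iterates. -/
noncomputable def fIterZ : ℕ → Polynomial ℤ
  | 0 => X
  | m + 1 => (fIterZ m) ^ 2 - 1

lemma map_fIterZ (m : ℕ) : (fIterZ m).map (Int.castRingHom ℚ) = fIterQ m := by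
  induction m with
  | zero => simp [fIterZ, fIterQ]
  | succ m ih => simp [fIterZ, fIterQ, Polynomial.map_sub, Polynomial.map_pow, ih]

lemma fIterZ_monic (m : ℕ) : (fIterZ m).Monic ∧ (fIterZ m).natDegree = 2 ^ m := by
  induction m with
  | zero => exact ⟨monic_X, natDegree_X⟩
  | succ m ih =>
    obtain ⟨hm, hd⟩ := ih
    have hsq : ((fIterZ m) ^ 2).Monic := hm.pow 2
    have hdd : ((fIterZ m) ^ 2).natDegree = 2 ^ (m + 1) := by
      rw [natDegree_pow, hd, pow_succ, mul_comm]
    have hdeg : (1 : Polynomial ℤ).degree < ((fIterZ m) ^ 2).degree := by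
      rw [degree_eq_natDegree hsq.ne_zero, hdd, degree_one]
      exact_mod_cast pow_pos (by norm_num : (0:ℕ) < 2) (m+1)
    constructor
    · exact hsq.sub_of_left hdeg
    · show ((fIterZ m) ^ 2 - C 1).natDegree = 2 ^ (m + 1)
      rw [natDegree_sub_C, hdd]

lemma map_fIterZ_mod2 (m : ℕ) :
    (fIterZ m).map (Int.castRingHom (ZMod 2)) = X ^ (2 ^ m) + C (m : ZMod 2) := by
  induction m with
  | zero => simp [fIterZ]
  | succ m ih =>
    have hc : ∀ c : ZMod 2, c * c = c := by decide
    have h2 : (2 : ZMod 2) = 0 := by decide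
    rw [fIterZ, Polynomial.map_sub, Polynomial.map_pow, Polynomial.map_one, ih]
    rw [add_sq, ← pow_mul, ← pow_succ]
    have h2' : (2 : Polynomial (ZMod 2)) = 0 := by
      have := map_ofNat (C : ZMod 2 →+* Polynomial (ZMod 2)) 2
      rw [← this, h2, map_zero]
    have hsq : (C (m : ZMod 2)) ^ 2 = C (m : ZMod 2) := by
      rw [← C_pow, sq, hc]
    have hone : (C (m : ZMod 2) - 1 : Polynomial (ZMod 2)) = C ((m : ZMod 2) + 1) := by
      have h3 : ∀ c : ZMod 2, c - 1 = c + 1 := by decide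
      rw [show ((m : ZMod 2) + 1) = (m : ZMod 2) - 1 from (h3 _).symm, map_sub, map_one]
    rw [h2', hsq]
    rw [show (X:Polynomial (ZMod 2)) ^ 2 ^ (m + 1) + 0 * X ^ 2 ^ m * C (m:ZMod 2) + C (m:ZMod 2) - 1 = X ^ 2 ^ (m + 1) + (C (m:ZMod 2) - 1) by ring, hone]
    norm_num

lemma eval_zero_fIterZ (m : ℕ) :
    (fIterZ m).eval 0 = if Even m then 0 else -1 := by
  induction m with
  | zero => simp [fIterZ]
  | succ m ih =>
    rw [fIterZ, eval_sub, eval_pow, eval_one, ih]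
    rcases Nat.even_or_odd m with h | h
    · simp [h, Nat.even_add_one]
    · simp [h, Nat.even_add_one, Nat.not_even_iff_odd.mpr h]

lemma eval_one_fIterZ (m : ℕ) :
    (fIterZ (m + 1)).eval 1 = if Even m then 0 else -1 := by
  induction m with
  | zero => simp [fIterZ]
  | succ m ih =>
    rw [fIterZ, eval_sub, eval_pow, eval_one, ih]
    rcases Nat.even_or_odd m with h | h
    · simp [h, Nat.even_add_one]
    · simp [h, Nat.even_add_one, Nat.not_even_iff_odd.mpr h]

/-- Eisenstein at 2 for monic integer polynomials. -/
lemma eisenstein_two (P : Polynomial ℤ) (hmon : P.Monic) (hd : 0 < P.natDegree)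
    (h2 : ∀ n, n < P.natDegree → (2 : ℤ) ∣ P.coeff n) (h0 : P.coeff 0 = -2) :
    Irreducible P := by
  apply irreducible_of_eisenstein_criterion
    (P := Ideal.span {(2 : ℤ)})
    ((Ideal.span_singleton_prime (by norm_num)).mpr Int.prime_two)
  · rw [hmon.leadingCoeff, Ideal.mem_span_singleton]
    norm_num
  · intro n hn
    rw [Ideal.mem_span_singleton]
    exact h2 n (by exact_mod_cast (degree_eq_natDegree hmon.ne_zero ▸ hn))
  · rw [degree_eq_natDegree hmon.ne_zero]
    exact_mod_cast hd
  · rw [Ideal.span_singleton_pow, Ideal.mem_span_singleton, h0]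
    norm_num
  · exact hmon.isPrimitive

lemma fIterZ_sub_one_irreducible_odd (m : ℕ) (hm : Odd m) :
    Irreducible (fIterZ m - 1) := by
  obtain ⟨hmon, hdeg⟩ := fIterZ_monic m
  have hmon' : (fIterZ m - 1).Monic := by
    have := hmon.sub_of_left (q := 1)
      (by rw [degree_eq_natDegree hmon.ne_zero, hdeg, degree_one]
          exact_mod_cast pow_pos (by norm_num : (0:ℕ) < 2) m)
    exact this
  have hdeg' : (fIterZ m - 1).natDegree = 2 ^ m := by
    rw [show (1 : Polynomial ℤ) = C 1 by simp, natDegree_sub_C, hdeg]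
  have hmap : (fIterZ m - 1).map (Int.castRingHom (ZMod 2)) = X ^ (2 ^ m) := by
    rw [Polynomial.map_sub, Polynomial.map_one, map_fIterZ_mod2]
    have : ((m : ℕ) : ZMod 2) = 1 := by
      rw [← ZMod.natCast_mod m 2, Nat.odd_iff.mp hm, Nat.cast_one]
    rw [this]; simp
  apply eisenstein_two _ hmon' (by rw [hdeg']; positivity)
  · intro n hn
    have := congrArg (fun p => Polynomial.coeff p n) hmap
    simp only [Polynomial.coeff_map, Polynomial.coeff_X_pow] at this
    rw [if_neg (by rw [hdeg'] at hn; omega)] at this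
    have h0 : (((fIterZ m - 1).coeff n : ℤ) : ZMod 2) = 0 := this
    exact_mod_cast (ZMod.intCast_zmod_eq_zero_iff_dvd _ 2).mp h0
  · rw [coeff_zero_eq_eval_zero, eval_sub, eval_one, eval_zero_fIterZ,
      if_neg (Nat.not_even_iff_odd.mpr hm)]
    norm_num

lemma fIterZ_sub_one_irreducible_even (m : ℕ) (hm : Even m) (h0 : m ≠ 0) :
    Irreducible (fIterZ m - 1) := by
  obtain ⟨hmon, hdeg⟩ := fIterZ_monic m
  have hmon' : (fIterZ m - 1).Monic := by
    exact hmon.sub_of_left (q := 1)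
      (by rw [degree_eq_natDegree hmon.ne_zero, hdeg, degree_one]
          exact_mod_cast pow_pos (by norm_num : (0:ℕ) < 2) m)
  have hdeg' : (fIterZ m - 1).natDegree = 2 ^ m := by
    rw [show (1 : Polynomial ℤ) = C 1 by simp, natDegree_sub_C, hdeg]
  set P : Polynomial ℤ := (fIterZ m - 1).comp (X + C 1) with hP
  have hPmon : P.Monic := hmon'.comp_X_add_C 1
  have hPdeg : P.natDegree = 2 ^ m := by
    rw [hP, natDegree_comp, natDegree_X_add_C, mul_one, hdeg']
  have hmap : P.map (Int.castRingHom (ZMod 2)) = X ^ (2 ^ m) := by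
    rw [hP, Polynomial.map_comp, Polynomial.map_sub, Polynomial.map_one,
      Polynomial.map_add, Polynomial.map_X, Polynomial.map_C, map_one,
      map_fIterZ_mod2]
    have hm2 : ((m : ℕ) : ZMod 2) = 0 := by
      rw [← ZMod.natCast_mod m 2, Nat.even_iff.mp hm, Nat.cast_zero]
    rw [hm2, map_zero, add_zero, sub_comp, pow_comp, X_comp, one_comp]
    rw [show ((X + C 1 : Polynomial (ZMod 2)) ^ 2 ^ m) = X ^ 2 ^ m + C 1 ^ 2 ^ m from
      add_pow_char_pow X (C 1) 2 m]
    simp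
  have hPirr : Irreducible P := by
    apply eisenstein_two _ hPmon (by rw [hPdeg]; positivity)
    · intro n hn
      have := congrArg (fun p => Polynomial.coeff p n) hmap
      simp only [Polynomial.coeff_map, Polynomial.coeff_X_pow] at this
      rw [if_neg (by rw [hPdeg] at hn; omega)] at this
      exact_mod_cast (ZMod.intCast_zmod_eq_zero_iff_dvd _ 2).mp this
    · obtain ⟨k, rfl⟩ : ∃ k, m = k + 1 := ⟨m - 1, by omega⟩
      rw [coeff_zero_eq_eval_zero, hP, eval_comp, eval_add, eval_X, eval_C,
        eval_sub, eval_one, zero_add, eval_one_fIterZ,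
        if_neg (by simpa [Nat.even_add_one] using hm)]
      norm_num
  have hkey : (algEquivAevalXAddC (1 : ℤ)) (fIterZ m - 1) = P := by
    simp [algEquivAevalXAddC, hP, ← comp_eq_aeval]
  exact (MulEquiv.irreducible_iff (algEquivAevalXAddC (1 : ℤ)).toMulEquiv).mp
    (by rw [show (algEquivAevalXAddC (1 : ℤ)).toMulEquiv (fIterZ m - 1)
        = (algEquivAevalXAddC (1 : ℤ)) (fIterZ m - 1) from rfl, hkey]; exact hPirr)

lemma fIterQ_sub_one_irreducible (m : ℕ) : Irreducible (fIterQ m - 1) := by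
  rcases Nat.eq_zero_or_pos m with rfl | hm
  · show Irreducible (X - 1)
    simpa using irreducible_X_sub_C (1 : ℚ)
  · have hz : Irreducible (fIterZ m - 1) := by
      rcases Nat.even_or_odd m with h | h
      · exact fIterZ_sub_one_irreducible_even m h (by omega)
      · exact fIterZ_sub_one_irreducible_odd m h
    have hprim : (fIterZ m - 1).IsPrimitive := by
      obtain ⟨hmon, hdeg⟩ := fIterZ_monic m
      exact (hmon.sub_of_left (q := 1)
        (by rw [degree_eq_natDegree hmon.ne_zero, hdeg, degree_one]
            exact_mod_cast pow_pos (by norm_num : (0:ℕ) < 2) m)).isPrimitive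
    have := (IsPrimitive.Int.irreducible_iff_irreducible_map_cast hprim).mp hz
    rwa [Polynomial.map_sub, Polynomial.map_one, map_fIterZ] at this

theorem fIter_sub_one_irreducible (m : ℕ) :
    (Irreducible (fIterQ m - 1) ∨ Irreducible ((fIterQ m).comp (X - 1) - 1)) ∧
      Irreducible (fIterQ m - 1) :=
  ⟨Or.inl (fIterQ_sub_one_irreducible m), fIterQ_sub_one_irreducible m⟩
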